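/- Let K be a closed convex cone in H(M_A,M_B) and let φ ∈ H(M_A,M_B). The following are equivalent: (1) φ ∈ K^⊳; (2) (1_A ⊗ φ)(C_ψ) ∈ C_{K°} for every ψ ∈ CP_A; (3) (1_B ⊗ ψ)(C_{φ*}) ∈ C_{K*°} for every ψ ∈ CP_A; (4) (1_A ⊗ σ*)(C_φ) is positive semidefinite for every σ ∈ K; (5) (1_A ⊗ φ*)(C_σ) is positive semidefinite for every σ ∈ K. -/

import Mathlib

open Matrix Finset
open scoped ComplexOrder Kronecker

/-- The algebra of `n × n` complex matrices. -/
abbrev Mat (n : ℕ) := Matrix (Fin n) (Fin n) ℂ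

/-- Linear maps between matrix algebras. -/
abbrev MMap (m n : ℕ) := Mat m →ₗ[ℂ] Mat n

/-- The bilinear pairing `⟨a,b⟩ = Tr(aᵀ b)`. -/
noncomputable def mpair {ι : Type*} [Fintype ι] (x y : Matrix ι ι ℂ) : ℂ :=
  (xᵀ * y).trace

/-- The Choi matrix `C_φ = Σ_{i,j} e_{ij} ⊗ φ(e_{ij})`. -/
noncomputable def choi {m n : ℕ} (φ : MMap m n) :
    Matrix (Fin m × Fin n) (Fin m × Fin n) ℂ :=
  Matrix.of fun p q => φ (Matrix.single p.1 q.1 1) p.2 q.2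

/-- The pairing on maps `⟨φ,ψ⟩ = ⟨C_φ, C_ψ⟩`. -/
noncomputable def mapPair {m n : ℕ} (φ ψ : MMap m n) : ℂ := mpair (choi φ) (choi ψ)

/-- The adjoint `φ*` with respect to the pairing `⟨a,b⟩ = Tr(aᵀ b)`:
it satisfies `⟨φ(a),b⟩ = ⟨a,φ*(b)⟩`. -/
noncomputable def adjMap {m n : ℕ} (φ : MMap m n) : MMap n m where
  toFun y := Matrix.of fun i j => mpair (φ (Matrix.single i j 1)) y
  map_add' y z := by
    ext i j
    simp [mpair, Matrix.mul_add]
  map_smul' c y := by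
    ext i j
    simp [mpair, Matrix.mul_smul]

/-- Hermitian-preserving maps: `φ(a*) = φ(a)*`. -/
def IsHermP {m n : ℕ} (φ : MMap m n) : Prop := ∀ x : Mat m, φ xᴴ = (φ x)ᴴ

/-- The real vector space `H(M_A,M_B)` of Hermitian-preserving maps, as a set. -/
def HermSet (m n : ℕ) : Set (MMap m n) := {φ | IsHermP φ}

/-- Positive maps: mapping positive semidefinite matrices to positive semidefinite ones. -/
def IsPosMap {m n : ℕ} (φ : MMap m n) : Prop :=
  ∀ x : Mat m, x.PosSemidef → (φ x).PosSemidef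

/-- Completely positive maps: those whose Choi matrix is positive semidefinite. -/
def IsCP {m n : ℕ} (φ : MMap m n) : Prop := (choi φ).PosSemidef

/-- The cone `CP` of completely positive maps. -/
def CPset (m n : ℕ) : Set (MMap m n) := {φ | IsCP φ}

/-- `K₁ ∘ K₀ = {φ₁ ∘ φ₀ : φ₁ ∈ K₁, φ₀ ∈ K₀}`. -/
def compSet {m n p : ℕ} (K1 : Set (MMap n p)) (K0 : Set (MMap m n)) : Set (MMap m p) :=
  {χ | ∃ φ₁ ∈ K1, ∃ φ₀ ∈ K0, χ = φ₁ ∘ₗ φ₀}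

/-- `K₂ ∘ K₁ ∘ K₀ = {φ₂ ∘ φ₁ ∘ φ₀ : φᵢ ∈ Kᵢ}`. -/
def comp3 {m n p q : ℕ} (K2 : Set (MMap p q)) (K1 : Set (MMap n p)) (K0 : Set (MMap m n)) :
    Set (MMap m q) :=
  {χ | ∃ φ₂ ∈ K2, ∃ φ₁ ∈ K1, ∃ φ₀ ∈ K0, χ = φ₂ ∘ₗ φ₁ ∘ₗ φ₀}

/-- The dual cone `K° = {ψ ∈ H(M_A,M_B) : ⟨φ,ψ⟩ ≥ 0 for all φ ∈ K}`. -/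
def dualCone {m n : ℕ} (K : Set (MMap m n)) : Set (MMap m n) :=
  {ψ | IsHermP ψ ∧ ∀ φ ∈ K, 0 ≤ mapPair φ ψ}

/-- `K* = {φ* : φ ∈ K}`. -/
noncomputable def starSet {m n : ℕ} (K : Set (MMap m n)) : Set (MMap n m) := adjMap '' K

/-- `K^⊳ = (K ∘ CP_A)°`. -/
def rdualSet {m n : ℕ} (K : Set (MMap m n)) : Set (MMap m n) :=
  dualCone (compSet K (CPset m m))

/-- `K^⊲ = (CP_B ∘ K)°`. -/
def ldualSet {m n : ℕ} (K : Set (MMap m n)) : Set (MMap m n) :=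
  dualCone (compSet (CPset n n) K)

/-- A convex cone of maps: closed under addition and nonnegative real scaling. -/
def IsConeSet {m n : ℕ} (K : Set (MMap m n)) : Prop :=
  (∀ φ ∈ K, ∀ ψ ∈ K, φ + ψ ∈ K) ∧ (∀ φ ∈ K, ∀ r : ℝ, 0 ≤ r → (r : ℂ) • φ ∈ K)

/-- A closed convex cone of maps (closedness via the Choi isomorphism). -/
def IsClosedConeSet {m n : ℕ} (K : Set (MMap m n)) : Prop :=
  IsConeSet K ∧ IsClosed (choi '' K)

/-- Ampliation `1_Z ⊗ σ : M_Z ⊗ M_X → M_Z ⊗ M_Y`. -/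
def idTensor {z x y : ℕ} (σ : MMap x y)
    (M : Matrix (Fin z × Fin x) (Fin z × Fin x) ℂ) :
    Matrix (Fin z × Fin y) (Fin z × Fin y) ℂ :=
  Matrix.of fun p q => σ (Matrix.of fun k l => M (p.1, k) (q.1, l)) p.2 q.2

/-- Ampliation `σ ⊗ 1_Z : M_X ⊗ M_Z → M_Y ⊗ M_Z`. -/
def tensorId {x y z : ℕ} (σ : MMap x y)
    (M : Matrix (Fin x × Fin z) (Fin x × Fin z) ℂ) :
    Matrix (Fin y × Fin z) (Fin y × Fin z) ℂ :=
  Matrix.of fun p q => σ (Matrix.of fun i j => M (i, p.2) (j, q.2)) p.1 q.1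

/-- `S_1`: the closed convex cone generated by `x ⊗ y` with `x, y` positive semidefinite. -/
def SepCone (m n : ℕ) : Set (Matrix (Fin m × Fin n) (Fin m × Fin n) ℂ) :=
  closure {X | ∃ (r : ℕ) (x : Fin r → Mat m) (y : Fin r → Mat n),
    (∀ i, (x i).PosSemidef ∧ (y i).PosSemidef) ∧ X = ∑ i, x i ⊗ₖ y i}

/-- `SP_1`: Hermitian-preserving maps with separable Choi matrix. -/
def SP1set (m n : ℕ) : Set (MMap m n) := {φ | IsHermP φ ∧ choi φ ∈ SepCone m n}


/-- Vectors of Schmidt rank at most `k`. -/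
def SchmidtRankLE (k : ℕ) {m n : ℕ} (ξ : Fin m × Fin n → ℂ) : Prop :=
  ∃ (u : Fin k → Fin m → ℂ) (v : Fin k → Fin n → ℂ),
    ξ = fun p => ∑ i, u i p.1 * v i p.2

/-- `k`-blockpositive matrices: `⟨Y, |ξ⟩⟨ξ|⟩ ≥ 0` for every `ξ` of Schmidt rank at most `k`. -/
def BlockPos (k : ℕ) {m n : ℕ} (Y : Matrix (Fin m × Fin n) (Fin m × Fin n) ℂ) : Prop :=
  ∀ ξ : Fin m × Fin n → ℂ, SchmidtRankLE k ξ →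
    0 ≤ mpair Y (Matrix.of fun p q => ξ p * star (ξ q))

/-- `S_k`: the closed convex cone generated by `|ξ⟩⟨ξ|` for `ξ` of Schmidt rank at most `k`. -/
def SchmidtCone (k m n : ℕ) : Set (Matrix (Fin m × Fin n) (Fin m × Fin n) ℂ) :=
  closure {X | ∃ (r : ℕ) (ξ : Fin r → Fin m × Fin n → ℂ),
    (∀ i, SchmidtRankLE k (ξ i)) ∧
    X = ∑ i, Matrix.of fun p q => ξ i p * star (ξ i q)}

/-- `k`-positive maps: the ampliation `1_{M_k} ⊗ φ` is a positive map. -/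
def IsKPos (k : ℕ) {m n : ℕ} (φ : MMap m n) : Prop :=
  ∀ X : Matrix (Fin k × Fin m) (Fin k × Fin m) ℂ, X.PosSemidef → (idTensor φ X).PosSemidef

/-- The transpose map as a linear map. -/
def tmap (m : ℕ) : MMap m m where
  toFun x := xᵀ
  map_add' x y := by simp [Matrix.transpose_add]
  map_smul' c x := by simp [Matrix.transpose_smul]

/-- Completely copositive maps: `CCP = {φ ∘ t : φ ∈ CP}`. -/
def CCPset (m : ℕ) : Set (MMap m m) := {χ | ∃ φ, IsCP φ ∧ χ = φ ∘ₗ tmap m}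

/-- PPT maps: `PPT = CP ∩ CCP`. -/
def PPTset (m : ℕ) : Set (MMap m m) := CPset m m ∩ CCPset m

/-- Decomposable maps: the convex hull of `CP` and `CCP`. -/
noncomputable def DECset (m : ℕ) : Set (MMap m m) := convexHull ℝ (CPset m m ∪ CCPset m)

/-- The cone `P_1` of positive maps. -/
def P1set (m n : ℕ) : Set (MMap m n) := {φ | IsPosMap φ}

/-- A right-mapping cone: a closed convex cone of positive (Hermitian-preserving) maps `L`
with `L ∘ CP_A ⊆ L`. -/
def IsRMC {m n : ℕ} (L : Set (MMap m n)) : Prop :=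
  L ⊆ HermSet m n ∧ (∀ φ ∈ L, IsPosMap φ) ∧ IsClosedConeSet L ∧
    compSet L (CPset m m) ⊆ L

/-- A left-mapping cone: a closed convex cone of positive (Hermitian-preserving) maps `L`
with `CP_B ∘ L ⊆ L`. -/
def IsLMC {m n : ℕ} (L : Set (MMap m n)) : Prop :=
  L ⊆ HermSet m n ∧ (∀ φ ∈ L, IsPosMap φ) ∧ IsClosedConeSet L ∧
    compSet (CPset n n) L ⊆ L


section Aux

variable {a b m n p z x y : ℕ}

lemma mpair_eq_sum {ι : Type*} [Fintype ι] (x y : Matrix ι ι ℂ) :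
    mpair x y = ∑ u, ∑ v, x u v * y u v := by
  rw [mpair, Matrix.trace]
  simp only [Matrix.diag, Matrix.mul_apply, Matrix.transpose_apply]
  rw [Finset.sum_comm]

lemma mpair_comm {ι : Type*} [Fintype ι] (x y : Matrix ι ι ℂ) : mpair x y = mpair y x := by
  simp [mpair_eq_sum, mul_comm]

lemma map_apply_eq_sum (φ : MMap m n) (x : Mat m) :
    φ x = ∑ i, ∑ j, x i j • φ (Matrix.single i j 1) := by
  conv_lhs => rw [Matrix.matrix_eq_sum_single x]
  rw [map_sum]
  refine Finset.sum_congr rfl fun i _ => ?_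
  rw [map_sum]
  refine Finset.sum_congr rfl fun j _ => ?_
  rw [← LinearMap.map_smul, Matrix.smul_single, smul_eq_mul, mul_one]

lemma map_apply' (φ : MMap m n) (x : Mat m) (u : Fin n) (v : Fin n) :
    φ x u v = ∑ i, ∑ j, x i j * φ (Matrix.single i j 1) u v := by
  rw [map_apply_eq_sum φ x]
  simp [Matrix.sum_apply]

lemma adjMap_apply (φ : MMap m n) (y : Mat n) (i j : Fin m) :
    adjMap φ y i j = mpair (φ (Matrix.single i j 1)) y := rfl

lemma choi_apply (φ : MMap m n) (i j : Fin m) (p q : Fin n) :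
    choi φ (i, p) (j, q) = φ (Matrix.single i j 1) p q := rfl

end Aux
section Aux2

variable {a b m n p z x y : ℕ}

lemma mpair_eq_sum' {ι : Type*} [Fintype ι] (x y : Matrix ι ι ℂ) :
    mpair x y = ∑ p : ι × ι, x p.1 p.2 * y p.1 p.2 := by
  rw [Fintype.sum_prod_type]; exact mpair_eq_sum x y

lemma map_apply'' (φ : MMap m n) (x : Mat m) (u v : Fin n) :
    φ x u v = ∑ q : Fin m × Fin m, x q.1 q.2 * φ (Matrix.single q.1 q.2 1) u v := by
  rw [Fintype.sum_prod_type]; exact map_apply' φ x u v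

lemma mpair_adj (φ : MMap m n) (x : Mat m) (y : Mat n) :
    mpair (φ x) y = mpair x (adjMap φ y) := by
  rw [mpair_eq_sum', mpair_eq_sum']
  calc ∑ p : Fin n × Fin n, (φ x) p.1 p.2 * y p.1 p.2
      = ∑ p : Fin n × Fin n, ∑ q : Fin m × Fin m,
          (x q.1 q.2 * φ (Matrix.single q.1 q.2 1) p.1 p.2) * y p.1 p.2 := by
        refine Finset.sum_congr rfl fun p _ => ?_
        rw [map_apply'', Finset.sum_mul]
    _ = ∑ q : Fin m × Fin m, ∑ p : Fin n × Fin n,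
          (x q.1 q.2 * φ (Matrix.single q.1 q.2 1) p.1 p.2) * y p.1 p.2 :=
        Finset.sum_comm
    _ = ∑ q : Fin m × Fin m, x q.1 q.2 * adjMap φ y q.1 q.2 := by
        refine Finset.sum_congr rfl fun q _ => ?_
        rw [adjMap_apply, mpair_eq_sum', Finset.mul_sum]
        exact Finset.sum_congr rfl fun p _ => by ring

lemma mpair_stdBasis {ι : Type*} [Fintype ι] [DecidableEq ι] (X : Matrix ι ι ℂ) (p q : ι) :
    mpair X (Matrix.single p q 1) = X p q := by
  rw [mpair_eq_sum]
  simp [Matrix.single, ite_and, Finset.sum_ite_eq, mul_ite]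

lemma mapPair_eq_sum (φ ψ : MMap m n) :
    mapPair φ ψ = ∑ i, ∑ j, mpair (φ (Matrix.single i j 1)) (ψ (Matrix.single i j 1)) := by
  simp only [mapPair, mpair_eq_sum, choi, Matrix.of_apply, Fintype.sum_prod_type]
  refine Finset.sum_congr rfl fun i _ => ?_
  rw [Finset.sum_comm]

lemma mapPair_comm (φ ψ : MMap m n) : mapPair φ ψ = mapPair ψ φ := by
  rw [mapPair, mapPair, mpair_comm]

lemma choi_adjMap (φ : MMap m n) :
    choi (adjMap φ) = (choi φ).submatrix Prod.swap Prod.swap := by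
  ext ⟨p, i⟩ ⟨q, j⟩
  show adjMap φ (Matrix.single p q 1) i j = choi φ (i, p) (j, q)
  rw [adjMap_apply, mpair_stdBasis]
  rfl

lemma choi_inj {φ ψ : MMap m n} (h : choi φ = choi ψ) : φ = ψ := by
  refine LinearMap.ext fun x => ?_
  rw [map_apply_eq_sum φ, map_apply_eq_sum ψ]
  refine Finset.sum_congr rfl fun i _ => Finset.sum_congr rfl fun j _ => ?_
  congr 1
  ext p q
  exact congrFun (congrFun h (i, p)) (j, q)

lemma adjMap_adjMap (φ : MMap m n) : adjMap (adjMap φ) = φ := by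
  apply choi_inj
  rw [choi_adjMap, choi_adjMap, Matrix.submatrix_submatrix]
  ext u v
  simp [Matrix.submatrix_apply]

lemma adjMap_comp (ρ : MMap m n) (χ : MMap p m) :
    adjMap (ρ ∘ₗ χ) = adjMap χ ∘ₗ adjMap ρ := by
  refine LinearMap.ext fun ymat => ?_
  ext i j
  simp only [LinearMap.comp_apply, adjMap_apply, mpair_adj]

lemma mapPair_adjMap (φ ψ : MMap m n) : mapPair (adjMap φ) (adjMap ψ) = mapPair φ ψ := by
  simp only [mapPair, choi_adjMap, mpair_eq_sum, Matrix.submatrix_apply]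
  exact Fintype.sum_equiv (Equiv.prodComm (Fin n) (Fin m)) _ _
    (fun u => Fintype.sum_equiv (Equiv.prodComm (Fin n) (Fin m)) _ _ (fun v => rfl))

lemma mapPair_comp_left (σ : MMap a b) (χ : MMap a a) (φ : MMap a b) :
    mapPair (σ ∘ₗ χ) φ = mapPair χ (adjMap σ ∘ₗ φ) := by
  simp only [mapPair_eq_sum, LinearMap.comp_apply]
  exact Finset.sum_congr rfl fun i _ => Finset.sum_congr rfl fun j _ => mpair_adj σ _ _

lemma idTensor_choi (χ : MMap x y) (ρ : MMap z x) :
    idTensor χ (choi ρ) = choi (χ ∘ₗ ρ) := by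
  ext pq rs
  rfl

end Aux2
section Aux3

variable {a b m n p z x y : ℕ}

/-- Inverse of the Choi isomorphism. -/
noncomputable def choiInv (M : Matrix (Fin m × Fin n) (Fin m × Fin n) ℂ) : MMap m n where
  toFun x := Matrix.of fun p q => ∑ i, ∑ j, x i j * M (i, p) (j, q)
  map_add' x y := by
    ext p q
    simp [add_mul, Finset.sum_add_distrib]
  map_smul' c x := by
    ext p q
    simp [Finset.mul_sum, mul_assoc]

lemma choi_choiInv (M : Matrix (Fin m × Fin n) (Fin m × Fin n) ℂ) : choi (choiInv M) = M := by
  ext ⟨i, pp⟩ ⟨j, q⟩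
  show ∑ k, ∑ l, Matrix.single i j (1:ℂ) k l * M (k, pp) (l, q) = M (i, pp) (j, q)
  simp [Matrix.single, ite_and, Finset.sum_ite_eq, ite_mul]

lemma stdBasis_conjTranspose (i j : Fin m) :
    (Matrix.single i j (1:ℂ))ᴴ = Matrix.single j i 1 := by
  ext u v
  simp only [Matrix.conjTranspose_apply, Matrix.single, Matrix.of_apply]
  split_ifs with h1 h2 h2 <;> simp_all [and_comm]

lemma isHermP_comp {φ : MMap m n} {ψ : MMap p m} (hφ : IsHermP φ) (hψ : IsHermP ψ) :
    IsHermP (φ ∘ₗ ψ) := fun xm => by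
  rw [LinearMap.comp_apply, LinearMap.comp_apply, hψ xm, hφ]

lemma isHermP_choi {φ : MMap m n} (hφ : IsHermP φ) : (choi φ).IsHermitian := by
  ext ⟨i, pp⟩ ⟨j, q⟩
  show star (φ (Matrix.single j i 1) q pp) = φ (Matrix.single i j 1) pp q
  rw [← stdBasis_conjTranspose, hφ]
  simp [Matrix.conjTranspose_apply]

lemma isHermP_of_choi {φ : MMap m n} (h : (choi φ).IsHermitian) : IsHermP φ := by
  have key : ∀ (i j : Fin m) (pp q : Fin n),
      star (φ (Matrix.single i j 1) q pp) = φ (Matrix.single j i 1) pp q := by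
    intro i j pp q
    have h2 := congrFun (congrFun h (j, pp)) (i, q)
    simpa [Matrix.conjTranspose_apply, choi] using h2
  intro xm
  ext pp q
  rw [Matrix.conjTranspose_apply, map_apply' φ xmᴴ pp q, map_apply' φ xm q pp,
    star_sum]
  rw [Finset.sum_comm]
  refine Finset.sum_congr rfl fun i _ => ?_
  rw [star_sum]
  refine Finset.sum_congr rfl fun j _ => ?_
  rw [star_mul', key, Matrix.conjTranspose_apply]

lemma isHermP_adjMap {φ : MMap m n} (hφ : IsHermP φ) : IsHermP (adjMap φ) :=
  isHermP_of_choi (by rw [choi_adjMap]; exact (isHermP_choi hφ).submatrix _)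

lemma isCP_adjMap {ψ : MMap m n} (h : IsCP ψ) : IsCP (adjMap ψ) := by
  rw [IsCP, choi_adjMap]; exact h.submatrix _

lemma isHermP_of_isCP {ψ : MMap m n} (h : IsCP ψ) : IsHermP ψ := isHermP_of_choi h.1

lemma sum_mul_psd_nonneg {N : Type*} [Fintype N] [DecidableEq N] {P M : Matrix N N ℂ}
    (hP : P.PosSemidef) (hM : M.PosSemidef) : 0 ≤ ∑ u, ∑ v, P u v * M u v := by
  obtain ⟨A, rfl⟩ : ∃ A : Matrix N N ℂ, P = Aᴴ * A := by
    open scoped MatrixOrder in exact CStarAlgebra.nonneg_iff_eq_star_mul_self.mp hP.nonneg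
  obtain ⟨B, rfl⟩ : ∃ A : Matrix N N ℂ, M = Aᴴ * A := by
    open scoped MatrixOrder in exact CStarAlgebra.nonneg_iff_eq_star_mul_self.mp hM.nonneg
  have key : ∑ u, ∑ v, (Aᴴ * A) u v * (Bᴴ * B) u v
      = ∑ k, ∑ l, (∑ u, star (A k u) * star (B l u)) * (∑ v, A k v * B l v) := by
    calc ∑ u, ∑ v, (Aᴴ * A) u v * (Bᴴ * B) u v
        = ∑ u, ∑ v, ∑ k, ∑ l, (star (A k u) * star (B l u)) * (A k v * B l v) := by
          refine Finset.sum_congr rfl fun u _ => Finset.sum_congr rfl fun v _ => ?_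
          simp only [Matrix.mul_apply, Matrix.conjTranspose_apply]
          rw [Finset.sum_mul_sum]
          exact Finset.sum_congr rfl fun k _ => Finset.sum_congr rfl fun l _ => by ring
      _ = ∑ u, ∑ k, ∑ v, ∑ l, (star (A k u) * star (B l u)) * (A k v * B l v) :=
          Finset.sum_congr rfl fun u _ => Finset.sum_comm
      _ = ∑ k, ∑ u, ∑ v, ∑ l, (star (A k u) * star (B l u)) * (A k v * B l v) :=
          Finset.sum_comm
      _ = ∑ k, ∑ u, ∑ l, ∑ v, (star (A k u) * star (B l u)) * (A k v * B l v) :=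
          Finset.sum_congr rfl fun k _ => Finset.sum_congr rfl fun u _ => Finset.sum_comm
      _ = ∑ k, ∑ l, ∑ u, ∑ v, (star (A k u) * star (B l u)) * (A k v * B l v) :=
          Finset.sum_congr rfl fun k _ => Finset.sum_comm
      _ = ∑ k, ∑ l, (∑ u, star (A k u) * star (B l u)) * (∑ v, A k v * B l v) := by
          refine Finset.sum_congr rfl fun k _ => Finset.sum_congr rfl fun l _ => ?_
          rw [Finset.sum_mul_sum]
  rw [key]
  refine Finset.sum_nonneg fun k _ => Finset.sum_nonneg fun l _ => ?_
  have e : ∑ u, star (A k u) * star (B l u) = star (∑ v, A k v * B l v) := by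
    rw [star_sum]
    exact Finset.sum_congr rfl fun v _ => (star_mul' _ _).symm
  rw [e]
  exact star_mul_self_nonneg _

lemma psd_of_pairing {N : Type*} [Fintype N] [DecidableEq N] {M : Matrix N N ℂ}
    (hM : M.IsHermitian)
    (h : ∀ P : Matrix N N ℂ, P.PosSemidef → 0 ≤ ∑ u, ∑ v, P u v * M u v) :
    M.PosSemidef := by
  refine Matrix.posSemidef_iff_dotProduct_mulVec.mpr ⟨hM, fun w => ?_⟩
  set yv : N → ℂ := star w with hy
  have hP : (Matrix.of fun u v => yv u * star (yv v)).PosSemidef := by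
    refine Matrix.posSemidef_iff_dotProduct_mulVec.mpr ⟨?_, ?_⟩
    · ext u v
      simp only [Matrix.conjTranspose_apply, Matrix.of_apply, star_mul', star_star]
      ring
    · intro xv
      have h1 : (star xv) ⬝ᵥ ((Matrix.of fun u v => yv u * star (yv v)) *ᵥ xv)
          = ∑ u, ∑ v, star (xv u) * (yv u * star (yv v)) * xv v := by
        simp only [dotProduct, Matrix.mulVec, Matrix.of_apply, Pi.star_apply,
          Finset.mul_sum]
        exact Finset.sum_congr rfl fun u _ => Finset.sum_congr rfl fun v _ => by ring
      have h2 : star (∑ v, star (yv v) * xv v) * (∑ v, star (yv v) * xv v)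
          = ∑ u, ∑ v, star (xv u) * (yv u * star (yv v)) * xv v := by
        rw [star_sum, Finset.sum_mul_sum]
        refine Finset.sum_congr rfl fun u _ => Finset.sum_congr rfl fun v _ => ?_
        rw [star_mul', star_star]
        ring
      rw [h1, ← h2]
      exact star_mul_self_nonneg _
  have h2 := h _ hP
  have key : ∑ u, ∑ v, (Matrix.of fun u v => yv u * star (yv v)) u v * M u v
      = star w ⬝ᵥ (M *ᵥ w) := by
    simp only [dotProduct, Matrix.mulVec, Matrix.of_apply, Pi.star_apply, hy,
      star_star, Finset.mul_sum]
    refine Finset.sum_congr rfl fun u _ => Finset.sum_congr rfl fun v _ => ?_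
    ring
  rw [key] at h2
  exact h2

end Aux3
section Aux4

variable {a b m n : ℕ}

lemma mapPair_cp_nonneg {α β : MMap m n} (hα : IsCP α) (hβ : IsCP β) : 0 ≤ mapPair α β := by
  rw [mapPair, mpair_eq_sum]
  exact sum_mul_psd_nonneg hα hβ

lemma mapPair_shift (σ φ : MMap a b) (ψ : MMap a a) :
    mapPair σ (φ ∘ₗ ψ) = mapPair (σ ∘ₗ adjMap ψ) φ := by
  rw [mapPair_comm, mapPair_comp_left, mapPair_comp_left,
    ← mapPair_adjMap ψ (adjMap φ ∘ₗ σ), adjMap_comp, adjMap_adjMap]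

end Aux4

/-- characterizations of membership in `K^⊳` via ampliations. -/
theorem stmt13 {a b : ℕ} (K : Set (MMap a b))
    (hH : K ⊆ HermSet a b) (hK : IsClosedConeSet K)
    (φ : MMap a b) (hφ : IsHermP φ) :
    [φ ∈ rdualSet K,
     ∀ ψ ∈ CPset a a, idTensor φ (choi ψ) ∈ choi '' dualCone K,
     ∀ ψ ∈ CPset a a, idTensor ψ (choi (adjMap φ)) ∈ choi '' dualCone (starSet K),
     ∀ σ ∈ K, (idTensor (adjMap σ) (choi φ)).PosSemidef,
     ∀ σ ∈ K, (idTensor (adjMap φ) (choi σ)).PosSemidef].TFAE := by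
  tfae_have 1 → 4 := by
    rintro ⟨hHerm, hpair⟩ σ hσ
    rw [idTensor_choi]
    have hσH : IsHermP σ := hH hσ
    refine psd_of_pairing (isHermP_choi (isHermP_comp (isHermP_adjMap hσH) hφ)) ?_
    intro P hP
    have hψ : IsCP (choiInv P) := by rw [IsCP, choi_choiInv]; exact hP
    have h0 := hpair (σ ∘ₗ choiInv P) ⟨σ, hσ, choiInv P, hψ, rfl⟩
    rw [mapPair_comp_left] at h0
    have e : mapPair (choiInv P) (adjMap σ ∘ₗ φ)
        = ∑ u, ∑ v, P u v * choi (adjMap σ ∘ₗ φ) u v := by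
      rw [mapPair, mpair_eq_sum, choi_choiInv]
    rwa [e] at h0
  tfae_have 4 → 5 := by
    intro h4 σ hσ
    rw [idTensor_choi]
    have h := h4 σ hσ
    rw [idTensor_choi] at h
    have e : choi (adjMap φ ∘ₗ σ) = (choi (adjMap σ ∘ₗ φ)).submatrix Prod.swap Prod.swap := by
      rw [← choi_adjMap, adjMap_comp, adjMap_adjMap]
    rw [e]
    exact h.submatrix _
  tfae_have 5 → 1 := by
    intro h5
    refine ⟨hφ, ?_⟩
    rintro χ ⟨σ, hσ, ψ, hψ, rfl⟩
    rw [mapPair_comp_left]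
    have h := h5 σ hσ
    rw [idTensor_choi] at h
    have hcp : IsCP (adjMap σ ∘ₗ φ) := by
      have h2 := isCP_adjMap (show IsCP (adjMap φ ∘ₗ σ) from h)
      rwa [adjMap_comp, adjMap_adjMap] at h2
    exact mapPair_cp_nonneg hψ hcp
  tfae_have 1 → 2 := by
    rintro ⟨hHerm, hpair⟩ ψ hψ
    rw [idTensor_choi]
    refine ⟨φ ∘ₗ ψ, ⟨isHermP_comp hφ (isHermP_of_isCP hψ), ?_⟩, rfl⟩
    intro σ hσ
    rw [mapPair_shift]
    exact hpair _ ⟨σ, hσ, adjMap ψ, isCP_adjMap hψ, rfl⟩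
  tfae_have 2 → 3 := by
    intro h2 ψ hψ
    rw [idTensor_choi]
    refine ⟨ψ ∘ₗ adjMap φ, ⟨isHermP_comp (isHermP_of_isCP hψ) (isHermP_adjMap hφ), ?_⟩, rfl⟩
    rintro τ ⟨σ, hσ, rfl⟩
    have e : ψ ∘ₗ adjMap φ = adjMap (φ ∘ₗ adjMap ψ) := by
      rw [adjMap_comp, adjMap_adjMap]
    rw [e, mapPair_adjMap]
    have h := h2 (adjMap ψ) (isCP_adjMap hψ)
    rw [idTensor_choi] at h
    obtain ⟨χ, hχ, hc⟩ := h
    rw [show φ ∘ₗ adjMap ψ = χ from choi_inj hc.symm]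
    exact hχ.2 σ hσ
  tfae_have 3 → 1 := by
    intro h3
    refine ⟨hφ, ?_⟩
    rintro χ ⟨σ, hσ, ψ, hψ, rfl⟩
    have h := h3 ψ hψ
    rw [idTensor_choi] at h
    obtain ⟨χ', hχ', hc⟩ := h
    have hmem : ψ ∘ₗ adjMap φ ∈ dualCone (starSet K) := by
      rw [show ψ ∘ₗ adjMap φ = χ' from choi_inj hc.symm]
      exact hχ'
    have h0 := hmem.2 (adjMap σ) ⟨σ, hσ, rfl⟩
    have e : ψ ∘ₗ adjMap φ = adjMap (φ ∘ₗ adjMap ψ) := by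
      rw [adjMap_comp, adjMap_adjMap]
    rw [e, mapPair_adjMap, mapPair_shift, adjMap_adjMap] at h0
    exact h0
  tfae_finish
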